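/- Let λ be a composition, I a nonempty subset of {1,…,n}, and i ∈ I. If I is not comaximal with respect to λ, then the rational function r_I^{(i)} vanishes at z = λ̄, i.e. r_I^{(i)}(λ̄) = 0, whenever this evaluation is defined (no denominator of r_I^{(i)} vanishes at λ̄). -/

import Mathlib

open scoped BigOperators Classical

noncomputable section

/-- The ground field `F = ℚ(q,t)`. -/
abbrev F : Type := FractionRing (MvPolynomial (Fin 2) ℚ)

/-- The indeterminate `q` of `F = ℚ(q,t)`. -/
def q : F := algebraMap (MvPolynomial (Fin 2) ℚ) F (MvPolynomial.X 0)

/-- The indeterminate `t` of `F = ℚ(q,t)`. -/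
def t : F := algebraMap (MvPolynomial (Fin 2) ℚ) F (MvPolynomial.X 1)

/-- A composition with (at most) `n` parts: nonzero entries only in positions `1,…,n`. -/
def IsComp (n : ℕ) (η : ℕ → ℕ) : Prop := ∀ j, η j ≠ 0 → j ∈ Finset.Icc 1 n

/-- The modulus `|η| = η_1 + ⋯ + η_n`. -/
def wt (n : ℕ) (η : ℕ → ℕ) : ℕ := ∑ j ∈ Finset.Icc 1 n, η j

/-- `l'_η(i) = #{j<i : η_j ≥ η_i} + #{j>i : η_j > η_i}`. -/
def lprime (n : ℕ) (η : ℕ → ℕ) (i : ℕ) : ℕ :=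
  ((Finset.Icc 1 n).filter fun j => j < i ∧ η i ≤ η j).card +
  ((Finset.Icc 1 n).filter fun j => i < j ∧ η i < η j).card

/-- The spectral vector `η̄` with parameters `qp, tp`: `η̄_i = qp^(η_i) tp^(-l'_η(i))`. -/
def spec (qp tp : F) (n : ℕ) (η : ℕ → ℕ) : ℕ → F := fun i =>
  qp ^ (η i) * tp ^ (-(lprime n η i : ℤ))

/-- The finitely supported function obtained from `η` by truncating outside `[1,n]`. -/
def truncFinsupp (n : ℕ) (η : ℕ → ℕ) : ℕ →₀ ℕ :=
  Finsupp.onFinset (Finset.Icc 1 n) (fun j => if j ∈ Finset.Icc 1 n then η j else 0)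
    (fun a ha => by by_contra h; simp [h] at ha)

/-- The point obtained from `z` by exchanging coordinates `i` and `j`. -/
def swapPt (i j : ℕ) (z : ℕ → F) : ℕ → F :=
  fun k => if k = i then z j else if k = j then z i else z k

/-- The transposition operator `s_i`. -/
def sOp (i : ℕ) (f : (ℕ → F) → F) : (ℕ → F) → F := fun z => f (swapPt i (i+1) z)

/-- The Hecke operator `H_i` (with Hecke parameter `tp`). -/
def HOp (tp : F) (i : ℕ) (f : (ℕ → F) → F) : (ℕ → F) → F := fun z =>
  (tp - 1) * z i / (z i - z (i+1)) * f z +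
    (z i - tp * z (i+1)) / (z i - z (i+1)) * f (swapPt i (i+1) z)

/-- The point `(z_n/q, z_1, …, z_{n-1})` (coordinates outside `[1,n]` unchanged). -/
def deltaPt (qp : F) (n : ℕ) (z : ℕ → F) : ℕ → F := fun k =>
  if k = 1 then z n / qp else if k ≤ n then z (k-1) else z k

/-- The operator `Φ = (z_n - t^{-n+1})·Δ`. -/
def PhiOp (qp tp : F) (n : ℕ) (f : (ℕ → F) → F) : (ℕ → F) → F := fun z =>
  (z n - tp ^ (1 - (n:ℤ))) * f (deltaPt qp n z)

/-- The operator product `H_a H_{a+1} ⋯ H_b` (the identity when `a > b`). -/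
def Hprod (tp : F) (a b : ℕ) (f : (ℕ → F) → F) : (ℕ → F) → F :=
  (List.range' a (b + 1 - a)).foldr (fun j g => HOp tp j g) f

/-- The operator `Z̃_i = H_i ⋯ H_{n-1} Φ H_1 ⋯ H_{i-1}`. -/
def Ztilde (qp tp : F) (n i : ℕ) (f : (ℕ → F) → F) : (ℕ → F) → F :=
  Hprod tp i (n-1) (PhiOp qp tp n (Hprod tp 1 (i-1) f))

/-- The Cherednik operator `Ξ_i = z_i⁻¹ + z_i⁻¹ H_i ⋯ H_{n-1} Φ H_1 ⋯ H_{i-1}`. -/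
def XiOp (qp tp : F) (n i : ℕ) (f : (ℕ → F) → F) : (ℕ → F) → F := fun z =>
  (z i)⁻¹ * f z + (z i)⁻¹ * Ztilde qp tp n i f z

/-- The operator product `Ξ_1 ⋯ Ξ̂_i ⋯ Ξ_n` (with `Ξ_i` omitted). -/
def XiProdOmit (qp tp : F) (n i : ℕ) (f : (ℕ → F) → F) : (ℕ → F) → F :=
  ((List.range' 1 n).filter (fun j => j ≠ i)).foldr (fun j g => XiOp qp tp n j g) f

/-- The operator `Z_i = t^{-binom(n,2)} (z_i Ξ_i - 1) Ξ_1 ⋯ Ξ̂_i ⋯ Ξ_n`. -/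
def ZOp (qp tp : F) (n i : ℕ) (f : (ℕ → F) → F) : (ℕ → F) → F := fun z =>
  tp ^ (-((n * (n-1) / 2 : ℕ) : ℤ)) *
    (z i * XiOp qp tp n i (XiProdOmit qp tp n i f) z - XiProdOmit qp tp n i f z)

/-- A `qp`-generic point: the quantities `z_i qp^a` (for `1 ≤ i ≤ n`, `a ∈ ℕ`) are
pairwise distinct.  All the rational operations occurring in the operators above are
defined at such points. -/
def Generic (qp : F) (n : ℕ) (z : ℕ → F) : Prop :=
  ∀ i ∈ Finset.Icc 1 n, ∀ j ∈ Finset.Icc 1 n, ∀ a b : ℕ,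
    (i ≠ j ∨ a ≠ b) → z i * qp ^ a ≠ z j * qp ^ b

/-- The Demazure-Lusztig operator `T_i`. -/
def TOp (tp : F) (i : ℕ) (f : (ℕ → F) → F) : (ℕ → F) → F := fun z =>
  tp * f z + (tp * z i - z (i+1)) / (z i - z (i+1)) * (f (swapPt i (i+1) z) - f z)

/-- The inverse Demazure-Lusztig operator `T_i⁻¹ = t⁻¹ - 1 + t⁻¹ T_i`. -/
def TinvOp (tp : F) (i : ℕ) (f : (ℕ → F) → F) : (ℕ → F) → F := fun z =>
  (tp⁻¹ - 1) * f z + tp⁻¹ * TOp tp i f z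

/-- The point obtained from `z` by the `q`-shift `z_1 ↦ q z_1`. -/
def tauPt (qp : F) (z : ℕ → F) : ℕ → F := fun k => if k = 1 then qp * z 1 else z k

/-- The operator `ω = s_{n-1} ⋯ s_1 τ_1`. -/
def omegaOp (qp : F) (n : ℕ) (f : (ℕ → F) → F) : (ℕ → F) → F :=
  (List.range' 1 (n-1)).foldl (fun g j => sOp j g) (fun z => f (tauPt qp z))

/-- The operator product `T_a T_{a+1} ⋯ T_b` (identity when `a > b`). -/
def Tprod (tp : F) (a b : ℕ) (f : (ℕ → F) → F) : (ℕ → F) → F :=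
  (List.range' a (b + 1 - a)).foldr (fun j g => TOp tp j g) f

/-- The operator product `T_a⁻¹ T_{a+1}⁻¹ ⋯ T_b⁻¹` (identity when `a > b`). -/
def TinvProd (tp : F) (a b : ℕ) (f : (ℕ → F) → F) : (ℕ → F) → F :=
  (List.range' a (b + 1 - a)).foldr (fun j g => TinvOp tp j g) f

/-- The Cherednik operator `Y_i = t^{-n+1} T_i ⋯ T_{n-1} ω T_1⁻¹ ⋯ T_{i-1}⁻¹`. -/
def YOp (qp tp : F) (n i : ℕ) (f : (ℕ → F) → F) : (ℕ → F) → F := fun z =>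
  tp ^ (1 - (n:ℤ)) * Tprod tp i (n-1) (omegaOp qp n (TinvProd tp 1 (i-1) f)) z

/-- Strict dominance order on compositions (restricted to the window `[1,n]`). -/
def domlt (n : ℕ) (μ η : ℕ → ℕ) : Prop :=
  (∃ i ∈ Finset.Icc 1 n, μ i ≠ η i) ∧
    ∀ p ∈ Finset.Icc 1 n, ∑ i ∈ Finset.Icc 1 p, μ i ≤ ∑ i ∈ Finset.Icc 1 p, η i

/-- `sortDesc n μ` is `μ⁺`, the decreasing rearrangement of `(μ_1,…,μ_n)` (1-based). -/
def sortDesc (n : ℕ) (μ : ℕ → ℕ) : ℕ → ℕ := fun i =>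
  ((((Finset.Icc 1 n).val.map μ).sort (· ≤ ·)).reverse).getD (i - 1) 0

/-- The partial order `≺` on compositions: `μ ≺ η` iff `μ⁺ < η⁺`, or `μ⁺ = η⁺` and `μ < η`. -/
def precOrd (n : ℕ) (μ η : ℕ → ℕ) : Prop :=
  domlt n (sortDesc n μ) (sortDesc n η) ∨
    ((∀ i ∈ Finset.Icc 1 n, sortDesc n μ i = sortDesc n η i) ∧ domlt n μ η)

/-- `P` is the nonsymmetric Macdonald polynomial `E_η(z; qp, tp)`:
it is of the monic triangular form `z^η + Σ_{ν ≺ η} b_{ην} z^ν` and satisfies the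
eigenvalue equations `Y_i P = η̄_i P` (stated at generic points). -/
def IsNSMac (qp tp : F) (n : ℕ) (η : ℕ → ℕ) (P : MvPolynomial ℕ F) : Prop :=
  P.coeff (truncFinsupp n η) = 1 ∧
  (∀ ν : ℕ →₀ ℕ, P.coeff ν ≠ 0 → ν = truncFinsupp n η ∨
    (IsComp n (fun j => ν j) ∧ wt n (fun j => ν j) = wt n η ∧ precOrd n (fun j => ν j) η)) ∧
  (∀ i ∈ Finset.Icc 1 n, ∀ z : ℕ → F, Generic qp n z →
    YOp qp tp n i (fun w => MvPolynomial.eval w P) z = spec qp tp n η i * MvPolynomial.eval z P)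

/-- `P` is the nonsymmetric interpolation Macdonald polynomial `E*_η(z;q,t)`:
a polynomial in `z_1,…,z_n` of total degree `≤ |η|`, with coefficient `1` on `z^η`,
vanishing at the spectral vectors `μ̄` of all compositions `μ ≠ η` with `|μ| ≤ |η|`. -/
def IsInterp (n : ℕ) (η : ℕ → ℕ) (P : MvPolynomial ℕ F) : Prop :=
  P.totalDegree ≤ wt n η ∧
  P.coeff (truncFinsupp n η) = 1 ∧
  (∀ ν : ℕ →₀ ℕ, P.coeff ν ≠ 0 → IsComp n (fun j => ν j)) ∧
  ∀ μ : ℕ → ℕ, IsComp n μ → wt n μ ≤ wt n η → truncFinsupp n μ ≠ truncFinsupp n η →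
    MvPolynomial.eval (spec q t n μ) P = 0

/-- The least element `t_1` of a finite set `I`. -/
def fmin (I : Finset ℕ) : ℕ := if h : I.Nonempty then I.min' h else 0

/-- The greatest element `t_s` of a finite set `I`. -/
def fmax (I : Finset ℕ) : ℕ := if h : I.Nonempty then I.max' h else 0

/-- The least element of `I` greater than `j`. -/
def succI (I : Finset ℕ) (j : ℕ) : ℕ := fmin (I.filter (fun k => j < k))

/-- The greatest element of `I` smaller than `j`. -/
def predI (I : Finset ℕ) (j : ℕ) : ℕ := fmax (I.filter (fun k => k < j))

/-- `â(x,y) = (t-1)x/(x-y)`. -/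
def ahat (tp x y : F) : F := (tp - 1) * x / (x - y)

/-- `b̂(x,y) = (x-ty)/(x-y)`. -/
def bhat (tp x y : F) : F := (x - tp * y) / (x - y)

/-- `A_I(z) = â(z_{t_s}/q, z_{t_1}) ∏_{u=1}^{s-1} â(z_{t_u}, z_{t_{u+1}})`. -/
def AI (qp tp : F) (I : Finset ℕ) (z : ℕ → F) : F :=
  ahat tp (z (fmax I) / qp) (z (fmin I)) *
    (((I.sort (· ≤ ·)).zip (I.sort (· ≤ ·)).tail).map (fun p => ahat tp (z p.1) (z p.2))).prod

/-- `B_I(z)`. -/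
def BI (qp tp : F) (n : ℕ) (I : Finset ℕ) (z : ℕ → F) : F :=
  (z (fmax I) - tp ^ (1 - (n:ℤ))) *
    (∏ j ∈ (Finset.Icc 1 n).filter (fun j => j < fmin I), bhat tp (z (fmax I) / qp) (z j)) *
    (∏ j ∈ (Finset.Icc 1 n).filter (fun j => j ∉ I ∧ fmin I < j), bhat tp (z (predI I j)) (z j))

/-- `χ_I^{(i)}(z)`. -/
def chiI (qp tp : F) (I : Finset ℕ) (i : ℕ) (z : ℕ → F) : F :=
  if i = fmin I then (ahat tp (z (fmax I) / qp) (z i))⁻¹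
  else (ahat tp (z (predI I i)) (z i))⁻¹

/-- `r_I^{(i)}(z) = χ_I^{(i)}(z) A_I(z) B_I(z)`. -/
def rI (qp tp : F) (n : ℕ) (I : Finset ℕ) (i : ℕ) (z : ℕ → F) : F :=
  chiI qp tp I i z * AI qp tp I z * BI qp tp n I z

/-- The point `Iz`. -/
def Ipt (qp : F) (I : Finset ℕ) (z : ℕ → F) : ℕ → F := fun j =>
  if j = fmin I then z (fmax I) / qp
  else if j ∈ I then z (predI I j)
  else z j

/-- `B̃_I(z)`. -/
def BtildeI (qp tp : F) (n : ℕ) (I : Finset ℕ) (z : ℕ → F) : F :=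
  (qp * z (fmin I) - tp ^ (1 - (n:ℤ))) *
    (∏ j ∈ (Finset.Icc 1 n).filter (fun j => j ∉ I ∧ j < fmax I), bhat tp (z (succI I j)) (z j)) *
    (∏ j ∈ (Finset.Icc 1 n).filter (fun j => fmax I < j), bhat tp (qp * z (fmin I)) (z j))

/-- `χ̃_I^{(i)}(z)`. -/
def chitildeI (qp tp : F) (I : Finset ℕ) (i : ℕ) (z : ℕ → F) : F :=
  if i = fmax I then z i / ahat tp (z i) (qp * z (fmin I))
  else z i / ahat tp (z i) (z (succI I i))

/-- The composition `c_I(η)`. -/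
def cIfun (I : Finset ℕ) (η : ℕ → ℕ) : ℕ → ℕ := fun j =>
  if j = fmax I then η (fmin I) + 1
  else if j ∈ I then η (succI I j)
  else η j

/-- `I` is maximal with respect to `η`. -/
def MaximalI (n : ℕ) (I : Finset ℕ) (η : ℕ → ℕ) : Prop :=
  (∀ j ∈ Finset.Icc 1 n, j ∉ I → j < fmax I → η j ≠ η (succI I j)) ∧
  (∀ j ∈ Finset.Icc 1 n, fmax I < j → η j ≠ η (fmin I) + 1)

/-- `I` is comaximal with respect to `lam`. -/
def CoMaximalI (n : ℕ) (I : Finset ℕ) (lam : ℕ → ℕ) : Prop :=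
  (∀ j ∈ Finset.Icc 1 n, j ∉ I → fmin I < j → lam j ≠ lam (predI I j)) ∧
  (∀ j ∈ Finset.Icc 1 n, j < fmin I → lam j ≠ lam (fmax I) - 1) ∧
  lam (fmax I) ≠ 0

/-- `J^I_η`: the collection of nonempty subsets of `{1,…,n}` maximal with respect to `η`. -/
def Jset (n : ℕ) (η : ℕ → ℕ) : Finset (Finset ℕ) :=
  (Finset.Icc 1 n).powerset.filter (fun I => I.Nonempty ∧ MaximalI n I η)

/-- The arm length `a_η(i,j) = η_i - j`. -/
def armF (η : ℕ → ℕ) (i j : ℕ) : ℕ := η i - j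

/-- The leg length `l_η(i,j)`. -/
def legF (n : ℕ) (η : ℕ → ℕ) (i j : ℕ) : ℕ :=
  ((Finset.Icc 1 n).filter fun k => i < k ∧ j ≤ η k ∧ η k ≤ η i).card +
  ((Finset.Icc 1 n).filter fun k => k < i ∧ j ≤ η k + 1 ∧ η k + 1 ≤ η i).card

/-- `d'_η(qp,tp) = ∏_{s ∈ diag(η)} (1 - qp^{a_η(s)+1} tp^{l_η(s)})`. -/
def dprime (qp tp : F) (n : ℕ) (η : ℕ → ℕ) : F :=
  ∏ i ∈ Finset.Icc 1 n, ∏ j ∈ Finset.Icc 1 (η i),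
    (1 - qp ^ (armF η i j + 1) * tp ^ (legF n η i j))

/-- `k_η = (∏_i η̄_i^{η_i}) d'_η(q⁻¹,t⁻¹)`. -/
def kconst (n : ℕ) (η : ℕ → ℕ) : F :=
  (∏ i ∈ Finset.Icc 1 n, spec q t n η i ^ (η i)) * dprime q⁻¹ t⁻¹ n η

/-- The Pieri coefficient `a_{η,c_I(η)}`. -/
def acoef (n : ℕ) (η : ℕ → ℕ) (I : Finset ℕ) : F :=
  -((q - 1) * dprime q⁻¹ t⁻¹ n η * AI q t I (spec q t n η) * BtildeI q t n I (spec q t n η)) /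
    (q ^ (η (fmin I) + 1) * (t - 1) * dprime q⁻¹ t⁻¹ n (cIfun I η))

/-- The tuples `(v_1,…,v_n)` of nonnegative integers with `v_1 + ⋯ + v_n = m`. -/
def compTuples (n m : ℕ) : Finset (Fin n → ℕ) :=
  (Fintype.piFinset fun _ => Finset.range (m + 1)).filter (fun v => ∑ i, v i = m)

/-- The (1-based) composition associated with a tuple `v : Fin n → ℕ`. -/
def ofFin (n : ℕ) (v : Fin n → ℕ) : ℕ → ℕ := fun j =>
  if h : 1 ≤ j ∧ j - 1 < n then v ⟨j - 1, h.2⟩ else 0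

/-!
If `I` is not comaximal with respect to `λ`, one factor of `B_I` vanishes at `λ̄`.
The key observation is that whenever `l'_λ` jumps by exactly one between two positions,
the corresponding entries of `λ̄` differ by the factor `t` (or `qt`), which is precisely
a zero of the numerator `x - t y` of `b̂(x, y)`:
* a position `j ∉ I` after `t_1` with `λ_j = λ_p`, `p` its predecessor in `I`, kills
  `b̂(λ̄_p, λ̄_j)` (take `j` minimal, so that no part equal to `λ_j` lies strictly between);
* a position `j < t_1` with `λ_j = λ_{t_s} - 1` kills `b̂(λ̄_{t_s}/q, λ̄_j)`;
* if `λ_{t_s} = 0` and no later part vanishes, then `λ̄_{t_s} = t^{1-n}` kills the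
  leading factor `z_{t_s} - t^{1-n}`.
-/

open Finset

lemma q_ne_zero : q ≠ 0 := fun h =>
  MvPolynomial.X_ne_zero (R := ℚ) 0
    (IsFractionRing.injective (MvPolynomial (Fin 2) ℚ) F (by rwa [map_zero]))

lemma t_ne_zero : t ≠ 0 := fun h =>
  MvPolynomial.X_ne_zero (R := ℚ) 1
    (IsFractionRing.injective (MvPolynomial (Fin 2) ℚ) F (by rwa [map_zero]))

lemma bhat_eq_zero_of_eq_mul {tp x y : F} (h : x = tp * y) : bhat tp x y = 0 := by
  simp [bhat, h]

section FiniteSetBounds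

variable {I : Finset ℕ} {k : ℕ}

lemma fmin_mem (hne : I.Nonempty) : fmin I ∈ I := by
  rw [fmin, dif_pos hne]; exact I.min'_mem hne

lemma fmin_le (hk : k ∈ I) : fmin I ≤ k := by
  rw [fmin, dif_pos ⟨k, hk⟩]; exact I.min'_le k hk

lemma fmax_mem (hne : I.Nonempty) : fmax I ∈ I := by
  rw [fmax, dif_pos hne]; exact I.max'_mem hne

lemma le_fmax (hk : k ∈ I) : k ≤ fmax I := by
  rw [fmax, dif_pos ⟨k, hk⟩]; exact I.le_max' k hk

lemma predI_mem_lt_max {j : ℕ} (h : ∃ k ∈ I, k < j) :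
    predI I j ∈ I ∧ predI I j < j ∧ ∀ k ∈ I, k < j → k ≤ predI I j := by
  obtain ⟨k₀, hk₀I, hk₀j⟩ := h
  have hne : (I.filter (· < j)).Nonempty := ⟨k₀, mem_filter.2 ⟨hk₀I, hk₀j⟩⟩
  obtain ⟨hmem, hlt⟩ := mem_filter.1 (fmax_mem hne)
  exact ⟨hmem, hlt, fun k hk hkj => le_fmax (mem_filter.2 ⟨hk, hkj⟩)⟩

lemma predI_of_fmax_lt (h : fmax I < k) : predI I k = fmax I := by
  rw [predI, filter_true_of_mem fun x hx => (le_fmax hx).trans_lt h]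

end FiniteSetBounds

section SpectralVector

variable {n : ℕ} {lam : ℕ → ℕ}

lemma lprime_eq_sum (c : ℕ) :
    lprime n lam c = ∑ k ∈ Icc 1 n,
      ((if k < c ∧ lam c ≤ lam k then 1 else 0) +
        (if c < k ∧ lam c < lam k then 1 else 0)) := by
  rw [lprime, card_filter, card_filter, ← sum_add_distrib]

lemma lprime_eq_add_one_of_forall {a b : ℕ} (hb : b ∈ Icc 1 n)
    (h : ∀ k ∈ Icc 1 n,
      (if k < a ∧ lam a ≤ lam k then 1 else 0) + (if a < k ∧ lam a < lam k then 1 else 0)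
        = (if k < b ∧ lam b ≤ lam k then 1 else 0) + (if b < k ∧ lam b < lam k then 1 else 0)
          + if k = b then 1 else 0) :
    lprime n lam a = lprime n lam b + 1 := by
  rw [lprime_eq_sum, lprime_eq_sum, sum_congr rfl h, sum_add_distrib, sum_ite_eq', if_pos hb]

lemma lprime_eq_add_one_of_eq {a b : ℕ} (hb : b ∈ Icc 1 n) (hba : b < a) (hv : lam a = lam b)
    (hbetween : ∀ k ∈ Icc 1 n, b < k → k < a → lam k ≠ lam a) :
    lprime n lam a = lprime n lam b + 1 := by
  refine lprime_eq_add_one_of_forall hb fun k hk => ?_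
  rcases eq_or_ne k a with rfl | hka
  · split_ifs <;> omega
  rcases eq_or_ne k b with rfl | hkb
  · split_ifs <;> omega
  have := hbetween k hk
  split_ifs <;> omega

lemma lprime_eq_add_one_of_add_one_eq {a b : ℕ} (hb : b ∈ Icc 1 n) (hab : a < b)
    (hv : lam a + 1 = lam b)
    (hbefore : ∀ k ∈ Icc 1 n, k < a → lam k ≠ lam a)
    (hafter : ∀ k ∈ Icc 1 n, b < k → lam k ≠ lam b) :
    lprime n lam a = lprime n lam b + 1 := by
  refine lprime_eq_add_one_of_forall hb fun k hk => ?_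
  rcases eq_or_ne k a with rfl | hka
  · split_ifs <;> omega
  rcases eq_or_ne k b with rfl | hkb
  · split_ifs <;> omega
  have := hbefore k hk
  have := hafter k hk
  split_ifs <;> omega

lemma lprime_eq_sub_one_of_zero {c : ℕ} (hc : c ∈ Icc 1 n) (hzero : lam c = 0)
    (hafter : ∀ k ∈ Icc 1 n, c < k → lam k ≠ 0) :
    lprime n lam c = n - 1 := by
  have hleft : (Icc 1 n).filter (fun j => j < c ∧ lam c ≤ lam j) = Ico 1 c := by
    ext j; simp only [mem_filter, mem_Icc, mem_Ico, hzero, zero_le, and_true]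
    have := (mem_Icc.1 hc).2; omega
  have hright : (Icc 1 n).filter (fun j => c < j ∧ lam c < lam j) = Ioc c n := by
    ext j; simp only [mem_filter, mem_Icc, mem_Ioc, hzero, Nat.pos_iff_ne_zero]
    constructor
    · rintro ⟨⟨-, hjn⟩, hcj, -⟩; exact ⟨hcj, hjn⟩
    · rintro ⟨hcj, hjn⟩
      have := (mem_Icc.1 hc).1
      exact ⟨⟨by omega, hjn⟩, hcj, hafter j (mem_Icc.2 ⟨by omega, hjn⟩) hcj⟩
  rw [lprime, hleft, hright, Nat.card_Ico, Nat.card_Ioc]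
  have := mem_Icc.1 hc; omega

variable {qp tp : F}

lemma spec_eq_pow_mul_mul_spec (htp : tp ≠ 0) {a b m : ℕ} (hv : lam b = lam a + m)
    (hl : lprime n lam a = lprime n lam b + 1) :
    spec qp tp n lam b = qp ^ m * (tp * spec qp tp n lam a) := by
  rw [spec, spec, hv, hl, pow_add, Nat.cast_succ, neg_add, zpow_add₀ htp, zpow_neg_one]
  field_simp

end SpectralVector

section VanishingOfB

variable {qp tp : F} {n : ℕ} {lam : ℕ → ℕ} {I : Finset ℕ}

lemma BI_spec_eq_zero_of_eq_predI (htp : tp ≠ 0) (hI : I ⊆ Icc 1 n) (hne : I.Nonempty)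
    (hA : ∃ j ∈ Icc 1 n, j ∉ I ∧ fmin I < j ∧ lam j = lam (predI I j)) :
    BI qp tp n I (spec qp tp n lam) = 0 := by
  obtain ⟨hjn, hjI, hminj, hjv⟩ := Nat.find_spec hA
  set j := Nat.find hA
  set p := predI I j
  obtain ⟨hpI, hpj, hpmax⟩ := predI_mem_lt_max ⟨fmin I, fmin_mem hne, hminj⟩
  have hbetween : ∀ k ∈ Icc 1 n, p < k → k < j → lam k ≠ lam j := by
    intro k hk hpk hkj hkv
    have hkI : k ∉ I := fun h => (hpmax k h hkj).not_gt hpk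
    have hpredk : predI I k = p := by
      obtain ⟨hI', hlt, hmax⟩ := predI_mem_lt_max ⟨p, hpI, hpk⟩
      exact le_antisymm (hpmax _ hI' (hlt.trans hkj)) (hmax _ hpI hpk)
    exact Nat.find_min hA hkj ⟨hk, hkI, (fmin_le hpI).trans_lt hpk, by rw [hpredk, hkv, hjv]⟩
  have hl := lprime_eq_add_one_of_eq (hI hpI) hpj hjv hbetween
  have hfactor : bhat tp (spec qp tp n lam p) (spec qp tp n lam j) = 0 :=
    bhat_eq_zero_of_eq_mul <| by
      rw [spec_eq_pow_mul_mul_spec (m := 0) htp hjv.symm hl, pow_zero, one_mul]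
  have hj : j ∈ (Icc 1 n).filter fun k => k ∉ I ∧ fmin I < k :=
    mem_filter.2 ⟨hjn, hjI, hminj⟩
  rw [BI, prod_eq_zero hj hfactor, mul_zero]

lemma BI_spec_eq_zero_of_add_one_eq_fmax (htp : tp ≠ 0) (hqp : qp ≠ 0) (hI : I ⊆ Icc 1 n)
    (hne : I.Nonempty) (hafter : ∀ k ∈ Icc 1 n, fmax I < k → lam k ≠ lam (fmax I))
    (hB : ∃ j ∈ Icc 1 n, j < fmin I ∧ lam j + 1 = lam (fmax I)) :
    BI qp tp n I (spec qp tp n lam) = 0 := by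
  obtain ⟨hjn, hjmin, hjv⟩ := Nat.find_spec hB
  set j := Nat.find hB
  have hbefore : ∀ k ∈ Icc 1 n, k < j → lam k ≠ lam j := fun k hk hkj hkv =>
    Nat.find_min hB hkj ⟨hk, hkj.trans hjmin, by rw [hkv, hjv]⟩
  have hl := lprime_eq_add_one_of_add_one_eq (hI (fmax_mem hne))
    (hjmin.trans_le (fmin_le (fmax_mem hne))) hjv hbefore hafter
  have hfactor : bhat tp (spec qp tp n lam (fmax I) / qp) (spec qp tp n lam j) = 0 :=
    bhat_eq_zero_of_eq_mul <| by
      rw [spec_eq_pow_mul_mul_spec htp hjv.symm hl, pow_one, mul_div_cancel_left₀ _ hqp]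
  rw [BI, prod_eq_zero (mem_filter.2 ⟨hjn, hjmin⟩) hfactor, mul_zero, zero_mul]

lemma BI_spec_eq_zero_of_fmax_eq_zero (hI : I ⊆ Icc 1 n) (hne : I.Nonempty)
    (hzero : lam (fmax I) = 0) (hafter : ∀ k ∈ Icc 1 n, fmax I < k → lam k ≠ lam (fmax I)) :
    BI qp tp n I (spec qp tp n lam) = 0 := by
  have hmax := hI (fmax_mem hne)
  have hn : 1 ≤ n := (mem_Icc.1 hmax).1.trans (mem_Icc.1 hmax).2
  have hl := lprime_eq_sub_one_of_zero hmax hzero (hzero ▸ hafter)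
  have hspec : spec qp tp n lam (fmax I) = tp ^ (1 - (n : ℤ)) := by
    rw [spec, hzero, hl, pow_zero, one_mul, Nat.cast_sub hn]
    ring_nf
  rw [BI, hspec, sub_self, zero_mul, zero_mul]

lemma BI_spec_eq_zero_of_not_coMaximalI (htp : tp ≠ 0) (hqp : qp ≠ 0) (hI : I ⊆ Icc 1 n)
    (hne : I.Nonempty) (hcm : ¬ CoMaximalI n I lam) :
    BI qp tp n I (spec qp tp n lam) = 0 := by
  by_cases hA : ∃ j ∈ Icc 1 n, j ∉ I ∧ fmin I < j ∧ lam j = lam (predI I j)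
  · exact BI_spec_eq_zero_of_eq_predI htp hI hne hA
  push Not at hA
  have hafter : ∀ k ∈ Icc 1 n, fmax I < k → lam k ≠ lam (fmax I) := fun k hk hmaxk => by
    simpa only [predI_of_fmax_lt hmaxk] using
      hA k hk (fun h => (le_fmax h).not_gt hmaxk) ((fmin_le (fmax_mem hne)).trans_lt hmaxk)
  by_cases hzero : lam (fmax I) = 0
  · exact BI_spec_eq_zero_of_fmax_eq_zero hI hne hzero hafter
  -- `λ_{t_s} - 1` is a truncated subtraction, harmless since `λ_{t_s} ≠ 0`.
  have hB : ∃ j ∈ Icc 1 n, j < fmin I ∧ lam j + 1 = lam (fmax I) := by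
    by_contra! hB
    exact hcm ⟨hA, fun j hj hjmin hjv => hB j hj hjmin (by omega), hzero⟩
  exact BI_spec_eq_zero_of_add_one_eq_fmax htp hqp hI hne hafter hB

end VanishingOfB

theorem rI_vanishes_of_not_comaximal_general (n : ℕ)
    (lam : ℕ → ℕ)
    (I : Finset ℕ) (hI : I ⊆ Finset.Icc 1 n) (hne : I.Nonempty)
    (i : ℕ)
    (hcm : ¬ CoMaximalI n I lam) :
    rI q t n I i (spec q t n lam) = 0 := by
  rw [rI, BI_spec_eq_zero_of_not_coMaximalI t_ne_zero q_ne_zero hI hne hcm, mul_zero]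

/-- Proposition 4: if `I` is not comaximal with respect to `λ`
then `r_I^{(i)}(λ̄) = 0`, whenever no denominator of `r_I^{(i)}` vanishes at `λ̄`
(the nonvanishing hypotheses `hd1`, `hd2`). -/
theorem rI_vanishes_of_not_comaximal (n : ℕ) (hn : 2 ≤ n)
    (lam : ℕ → ℕ) (hlam : IsComp n lam)
    (I : Finset ℕ) (hI : I ⊆ Finset.Icc 1 n) (hne : I.Nonempty)
    (i : ℕ) (hiI : i ∈ I)
    (hd1 : ∀ a ∈ Finset.Icc 1 n, ∀ b ∈ Finset.Icc 1 n, a ≠ b →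
      spec q t n lam a ≠ spec q t n lam b)
    (hd2 : ∀ b ∈ Finset.Icc 1 n, spec q t n lam (fmax I) / q ≠ spec q t n lam b)
    (hcm : ¬ CoMaximalI n I lam) :
    rI q t n I i (spec q t n lam) = 0 :=
  rI_vanishes_of_not_comaximal_general n lam I hI hne i hcm
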